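/- For every smooth function β : U → ℝ, define f⁺ := p_t + Ψ + (r − r_s/2)·β and f⁻ := p_t + Ψ − (r − r_s/2)·β. Then the canonical Poisson bracket {f⁺, f⁻} := Σ_{μ∈{t,r,θ,φ}} (∂f⁺/∂p_μ · ∂f⁻/∂q^μ − ∂f⁺/∂q^μ · ∂f⁻/∂p_μ) vanishes at every point of U with r = r_s/2. In particular the two null factors P₀^± = p_t + Ψ ± (r − r_s/2)·√Φ of the rescaled extremal Kerr symbol Poisson-commute on the double characteristic set Σ₂ (on any neighbourhood where Φ > 0). -/
import Mathlib


noncomputable section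

/-- Partial derivative of a function on phase space ℝ⁸ with respect to the i-th variable.
Coordinates: x 0 = t, x 1 = r, x 2 = θ, x 3 = φ, x 4 = p_t, x 5 = p_r, x 6 = p_θ, x 7 = p_φ. -/
def pd (i : Fin 8) (f : (Fin 8 → ℝ) → ℝ) (x : Fin 8 → ℝ) : ℝ :=
  deriv (fun s => f (Function.update x i s)) (x i)

/-- Canonical Poisson bracket {f,g} = Σ_μ (∂f/∂p_μ ∂g/∂q^μ − ∂f/∂q^μ ∂g/∂p_μ). -/
def poissonBracket (f g : (Fin 8 → ℝ) → ℝ) (x : Fin 8 → ℝ) : ℝ :=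
  (pd 4 f x * pd 0 g x - pd 0 f x * pd 4 g x) +
  (pd 5 f x * pd 1 g x - pd 1 f x * pd 5 g x) +
  (pd 6 f x * pd 2 g x - pd 2 f x * pd 6 g x) +
  (pd 7 f x * pd 3 g x - pd 3 f x * pd 7 g x)

/-- Σ = r² + (r_s²/4)·cos²θ -/
def Sig (rs r th : ℝ) : ℝ := r ^ 2 + rs ^ 2 / 4 * Real.cos th ^ 2

/-- D = r² + r_s²/4 + (r_s·r/Σ)·(r_s²/4)·sin²θ -/
def Dfun (rs r th : ℝ) : ℝ :=
  r ^ 2 + rs ^ 2 / 4 + rs * r / Sig rs r th * (rs ^ 2 / 4) * Real.sin th ^ 2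

/-- Ψ = ((r_s·c/2)·(r_s·r/Σ)/D)·p_φ as a function on phase space. -/
def Psiv (rs c : ℝ) (x : Fin 8 → ℝ) : ℝ :=
  rs * c / 2 * (rs * x 1 / Sig rs (x 1) (x 2)) / Dfun rs (x 1) (x 2) * x 7

/-- The Boyer–Lindquist phase-space chart U = {r > 0, sin θ ≠ 0}. -/
def chartU : Set (Fin 8 → ℝ) := {x | 0 < x 1 ∧ Real.sin (x 2) ≠ 0}


lemma psiv_update (rs c : ℝ) (x : Fin 8 → ℝ) (i : Fin 8) (s : ℝ)
    (h1 : i ≠ 1) (h2 : i ≠ 2) (h7 : i ≠ 7) :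
    Psiv rs c (Function.update x i s) = Psiv rs c x := by
  simp [Psiv, Function.update_of_ne h1.symm, Function.update_of_ne h2.symm,
    Function.update_of_ne h7.symm]

lemma pd_zero (rs c : ℝ) (B : (Fin 8 → ℝ) → ℝ) (x : Fin 8 → ℝ)
    (hhor : x 1 = rs / 2) (i : Fin 8)
    (h1 : i ≠ 1) (h2 : i ≠ 2) (h7 : i ≠ 7) (h4 : i ≠ 4) :
    pd i (fun y => y 4 + Psiv rs c y + (y 1 - rs / 2) * B y) x = 0 := by
  unfold pd
  have : (fun s => (Function.update x i s) 4 + Psiv rs c (Function.update x i s) +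
      ((Function.update x i s) 1 - rs / 2) * B (Function.update x i s))
      = fun _ => x 4 + Psiv rs c x := by
    funext s
    rw [Function.update_of_ne h4.symm, Function.update_of_ne h1.symm,
      psiv_update rs c x i s h1 h2 h7, hhor]
    ring
  rw [this, deriv_const]

lemma pd_one (rs c : ℝ) (B : (Fin 8 → ℝ) → ℝ) (x : Fin 8 → ℝ)
    (hhor : x 1 = rs / 2) :
    pd 4 (fun y => y 4 + Psiv rs c y + (y 1 - rs / 2) * B y) x = 1 := by
  unfold pd
  have : (fun s => (Function.update x 4 s) 4 + Psiv rs c (Function.update x 4 s) +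
      ((Function.update x 4 s) 1 - rs / 2) * B (Function.update x 4 s))
      = fun s => s + Psiv rs c x := by
    funext s
    rw [Function.update_self, Function.update_of_ne (by decide : (1:Fin 8) ≠ 4),
      psiv_update rs c x 4 s (by decide) (by decide) (by decide), hhor]
    ring
  rw [this]
  simp

/-- for every smooth β : U → ℝ, the functions
f⁺ = p_t + Ψ + (r − r_s/2)·β and f⁻ = p_t + Ψ − (r − r_s/2)·β Poisson-commute at every
point of U on the horizon r = r_s/2 (in particular, the two null factors P₀^± of the
rescaled extremal Kerr symbol Poisson-commute on Σ₂). -/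
theorem null_factors_poisson_commute_on_horizon
    (rs c : ℝ) (hrs : 0 < rs) (hc : 0 < c)
    (β : (Fin 8 → ℝ) → ℝ) (hβ : ContDiffOn ℝ (⊤ : ℕ∞) β chartU)
    (x : Fin 8 → ℝ) (hx : x ∈ chartU) (hhor : x 1 = rs / 2) :
    poissonBracket
      (fun y => y 4 + Psiv rs c y + (y 1 - rs / 2) * β y)
      (fun y => y 4 + Psiv rs c y - (y 1 - rs / 2) * β y) x = 0 := by
  have hminus : (fun y => y 4 + Psiv rs c y - (y 1 - rs / 2) * β y)
      = fun y => y 4 + Psiv rs c y + (y 1 - rs / 2) * (-β y) := by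
    funext y; ring
  rw [hminus]
  unfold poissonBracket
  rw [pd_one rs c β x hhor, pd_one rs c (fun y => -β y) x hhor,
    pd_zero rs c β x hhor 0 (by decide) (by decide) (by decide) (by decide),
    pd_zero rs c (fun y => -β y) x hhor 0 (by decide) (by decide) (by decide) (by decide),
    pd_zero rs c β x hhor 3 (by decide) (by decide) (by decide) (by decide),
    pd_zero rs c (fun y => -β y) x hhor 3 (by decide) (by decide) (by decide) (by decide),
    pd_zero rs c β x hhor 5 (by decide) (by decide) (by decide) (by decide),
    pd_zero rs c (fun y => -β y) x hhor 5 (by decide) (by decide) (by decide) (by decide),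
    pd_zero rs c β x hhor 6 (by decide) (by decide) (by decide) (by decide),
    pd_zero rs c (fun y => -β y) x hhor 6 (by decide) (by decide) (by decide) (by decide)]
  ring
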